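/- arXiv:2104.02134 — 2 statements merged into one kernel-verified Lean document; each statement's English description precedes it below -/
import Mathlib

section
/- Let r, p, q be natural numbers with r ≥ 1, let Φ₁,…,Φ_p and Θ₁,…,Θ_q be real r×r matrices, and define the matrix polynomials Φ(z) = I − Φ₁z − ⋯ − Φ_p z^p and Θ(z) = I + Θ₁z + ⋯ + Θ_q z^q for z ∈ ℂ. Assume det Φ(z) ≠ 0 for all z ∈ ℂ with |z| ≤ 1. Let d₁,…,d_r ∈ ℝ and λ₁,…,λ_r ∈ ℝ with λ_k > 0 for every k, and let Δ^{−d,λ}(z) denote the diagonal complex r×r matrix with k-th diagonal entry (1 − e^{−λ_k} z)^{−d_k}. Then there exists a sequence of complex r×r matrices (Ψ_j)_{j≥0} with ∑_{j=0}^∞ ‖Ψ_j‖ < ∞ such that for every z ∈ ℂ with |z| ≤ 1 the series ∑_{j=0}^∞ Ψ_j z^j converges and equals Δ^{−d,λ}(z) · Φ(z)⁻¹ · Θ(z). -/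
open scoped BigOperators

attribute [local instance] Matrix.frobeniusNormedAddCommGroup

/-- The autoregressive matrix polynomial `Φ(z) = I - Φ₁ z - ⋯ - Φ_p z^p`
(real coefficient matrices viewed as complex matrices). -/
noncomputable def arPoly {r : ℕ} (p : ℕ) (Φ : Fin p → Matrix (Fin r) (Fin r) ℝ) (z : ℂ) :
    Matrix (Fin r) (Fin r) ℂ :=
  1 - ∑ i : Fin p, z ^ ((i : ℕ) + 1) • (Φ i).map (Complex.ofReal)

/-- The moving-average matrix polynomial `Θ(z) = I + Θ₁ z + ⋯ + Θ_q z^q`. -/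
noncomputable def maPoly {r : ℕ} (q : ℕ) (Θ : Fin q → Matrix (Fin r) (Fin r) ℝ) (z : ℂ) :
    Matrix (Fin r) (Fin r) ℂ :=
  1 + ∑ i : Fin q, z ^ ((i : ℕ) + 1) • (Θ i).map (Complex.ofReal)

/-- The inverse tempered fractional differencing diagonal matrix `Δ^{-d,λ}(z)`,
with `k`-th diagonal entry `(1 - e^{-λ_k} z)^{-d_k}` (principal-branch complex power). -/
noncomputable def tempDiag {r : ℕ} (d lam : Fin r → ℝ) (z : ℂ) :
    Matrix (Fin r) (Fin r) ℂ :=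
  Matrix.diagonal (fun k => (1 - Complex.exp (-(lam k : ℂ)) * z) ^ (-(d k) : ℂ))

open scoped NNReal ENNReal
open Metric

/-!
The function `Δ^{-d,λ}(z) Φ(z)⁻¹ Θ(z)` is holomorphic on the open set where `det Φ(z) ≠ 0` and
`‖z‖ < e^{λ_k}` for every `k` (there `‖e^{-λ_k} z‖ < 1`, so the bases of the complex powers stay
in the slit plane). This set contains the compact closed unit disc, hence a closed disc of some
radius `R > 1`. The Cauchy power series at `0` therefore has radius of convergence `> 1`, so its
coefficients are absolutely summable and it represents the function on the closed unit disc.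
-/

attribute [local instance] Matrix.frobeniusNormedSpace

theorem exists_gt_closedBall_subset_of_isOpen {E : Type*} [NormedAddCommGroup E]
    [NormedSpace ℝ E] [ProperSpace E] {U : Set E} (hU : IsOpen U) {x : E} {r : ℝ} (hr : 0 ≤ r)
    (h : closedBall x r ⊆ U) : ∃ R, r < R ∧ closedBall x R ⊆ U := by
  obtain ⟨δ, hδ, hδU⟩ := (isCompact_closedBall x r).exists_cthickening_subset_open hU h
  refine ⟨δ + r, by linarith, ?_⟩
  rwa [← cthickening_closedBall hδ.le hr]

theorem exists_summable_norm_hasSum_pow_smul_of_differentiableOn {E : Type*}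
    [NormedAddCommGroup E] [NormedSpace ℂ E] [CompleteSpace E] {f : ℂ → E} {U : Set ℂ}
    (hU : IsOpen U) (hdisk : closedBall 0 1 ⊆ U) (hf : DifferentiableOn ℂ f U) :
    ∃ a : ℕ → E, Summable (fun j => ‖a j‖) ∧
      ∀ z : ℂ, ‖z‖ ≤ 1 → HasSum (fun j => z ^ j • a j) (f z) := by
  obtain ⟨R, hR1, hRU⟩ := exists_gt_closedBall_subset_of_isOpen hU zero_le_one hdisk
  lift R to ℝ≥0 using (zero_le_one.trans hR1.le)
  have hR1' : (1 : ℝ≥0∞) < R := mod_cast hR1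
  have hP := (hf.mono hRU).hasFPowerSeriesOnBall (by exact_mod_cast zero_lt_one.trans hR1)
  refine ⟨(cauchyPowerSeries f 0 R).coeff, ?_, fun z hz => ?_⟩
  · simpa [← FormalMultilinearSeries.norm_apply_eq_norm_coef] using
      (cauchyPowerSeries f 0 R).summable_norm_mul_pow (r := 1) (hR1'.trans_le hP.r_le)
  · have hz : z ∈ eball (0 : ℂ) R := by
      simpa [← NNReal.coe_lt_coe] using hz.trans_lt hR1
    simpa using hP.hasSum_sub hz

section MatrixFunctions

attribute [local instance] Matrix.frobeniusNormedRing Matrix.frobeniusNormedAlgebra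

theorem differentiable_arPoly {r p : ℕ} (Φ : Fin p → Matrix (Fin r) (Fin r) ℝ) :
    Differentiable ℂ (arPoly p Φ) := by
  unfold arPoly; fun_prop

theorem differentiable_maPoly {r q : ℕ} (Θ : Fin q → Matrix (Fin r) (Fin r) ℝ) :
    Differentiable ℂ (maPoly q Θ) := by
  unfold maPoly; fun_prop

theorem differentiableAt_arPoly_inv {r p : ℕ} (Φ : Fin p → Matrix (Fin r) (Fin r) ℝ) {z : ℂ}
    (hz : (arPoly p Φ z).det ≠ 0) :
    DifferentiableAt ℂ (fun w => (arPoly p Φ w)⁻¹) z := by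
  simp only [Matrix.nonsing_inv_eq_ringInverse]
  exact (differentiableAt_inverse ((Matrix.isUnit_iff_isUnit_det _).2 hz.isUnit)).comp z
    (differentiable_arPoly Φ z)

theorem differentiableAt_diagonal {n : Type*} [Fintype n] [DecidableEq n] {g : ℂ → n → ℂ}
    {z : ℂ} (hg : ∀ k, DifferentiableAt ℂ (fun w => g w k) z) :
    DifferentiableAt ℂ (fun w => Matrix.diagonal (g w)) z :=
  (LinearMap.toContinuousLinearMap (Matrix.diagonalLinearMap n ℂ ℂ)).differentiableAt.comp z
    (differentiableAt_pi.2 hg)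

theorem differentiableAt_tempDiag {r : ℕ} (d lam : Fin r → ℝ) {z : ℂ}
    (hz : ∀ k, ‖z‖ < Real.exp (lam k)) :
    DifferentiableAt ℂ (tempDiag d lam) z := by
  refine differentiableAt_diagonal fun k => DifferentiableAt.cpow_const (by fun_prop) ?_
  rw [sub_eq_add_neg]
  refine Complex.mem_slitPlane_of_norm_lt_one ?_
  rw [norm_neg, norm_mul, Complex.norm_exp, Complex.neg_re, Complex.ofReal_re, Real.exp_neg,
    inv_mul_lt_iff₀ (Real.exp_pos _), mul_one]
  exact hz k

theorem differentiableAt_tempDiag_mul_arPoly_inv_mul_maPoly {r p q : ℕ} (d lam : Fin r → ℝ)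
    (Φ : Fin p → Matrix (Fin r) (Fin r) ℝ) (Θ : Fin q → Matrix (Fin r) (Fin r) ℝ) {z : ℂ}
    (hz : ∀ k, ‖z‖ < Real.exp (lam k)) (hdet : (arPoly p Φ z).det ≠ 0) :
    DifferentiableAt ℂ (fun w => tempDiag d lam w * (arPoly p Φ w)⁻¹ * maPoly q Θ w) z :=
  ((differentiableAt_tempDiag d lam hz).mul (differentiableAt_arPoly_inv Φ hdet)).mul
    (differentiable_maPoly Θ z)

end MatrixFunctions

theorem vartfima_causal_absolutely_summable_general
    (r p q : ℕ)
    (Φm : Fin p → Matrix (Fin r) (Fin r) ℝ) (Θm : Fin q → Matrix (Fin r) (Fin r) ℝ)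
    (hΦ : ∀ z : ℂ, ‖z‖ ≤ 1 → (arPoly p Φm z).det ≠ 0)
    (d lam : Fin r → ℝ) (hlam : ∀ k, 0 < lam k) :
    ∃ Ψ : ℕ → Matrix (Fin r) (Fin r) ℂ,
      Summable (fun j => ‖Ψ j‖) ∧
      ∀ z : ℂ, ‖z‖ ≤ 1 →
        HasSum (fun j : ℕ => z ^ j • Ψ j)
          (tempDiag d lam z * (arPoly p Φm z)⁻¹ * maPoly q Θm z) := by
  let U : Set ℂ := {z | (arPoly p Φm z).det ≠ 0} ∩ ⋂ k, ball 0 (Real.exp (lam k))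
  have hU : IsOpen U :=
    (isOpen_ne_fun (differentiable_arPoly Φm).continuous.matrix_det continuous_const).inter
      (isOpen_iInter_of_finite fun _ => isOpen_ball)
  have hdisk : closedBall 0 1 ⊆ U := fun z hz =>
    ⟨hΦ z (mem_closedBall_zero_iff.1 hz),
      Set.mem_iInter.2 fun k => closedBall_subset_ball (Real.one_lt_exp_iff.2 (hlam k)) hz⟩
  exact exists_summable_norm_hasSum_pow_smul_of_differentiableOn hU hdisk fun z hz =>
    (differentiableAt_tempDiag_mul_arPoly_inv_mul_maPoly d lam Φm Θm
      (fun k => mem_ball_zero_iff.1 (Set.mem_iInter.1 hz.2 k)) hz.1).differentiableWithinAt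

theorem vartfima_causal_absolutely_summable
    (r p q : ℕ) (hr : 1 ≤ r)
    (Φm : Fin p → Matrix (Fin r) (Fin r) ℝ) (Θm : Fin q → Matrix (Fin r) (Fin r) ℝ)
    (hΦ : ∀ z : ℂ, ‖z‖ ≤ 1 → (arPoly p Φm z).det ≠ 0)
    (d lam : Fin r → ℝ) (hlam : ∀ k, 0 < lam k) :
    ∃ Ψ : ℕ → Matrix (Fin r) (Fin r) ℂ,
      Summable (fun j => ‖Ψ j‖) ∧
      ∀ z : ℂ, ‖z‖ ≤ 1 →
        HasSum (fun j : ℕ => z ^ j • Ψ j)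
          (tempDiag d lam z * (arPoly p Φm z)⁻¹ * maPoly q Θm z) :=
  vartfima_causal_absolutely_summable_general r p q Φm Θm hΦ d lam hlam
end

section
/- Let (Ω, ℱ, P) be a probability space, r ≥ 1, and let ε : ℤ → Ω → (Fin r → ℝ) be a family of random vectors such that each component ε_{t,k} is square-integrable, E[ε_{t,k}] = 0 for all t ∈ ℤ and k, E[ε_{s,k} ε_{t,l}] = 0 whenever s ≠ t, and E[ε_{t,k} ε_{t,l}] = Σ_{kl} for all t, where Σ is a fixed real symmetric positive semidefinite r×r matrix. Let Ψ : ℕ → Matrix (Fin r) (Fin r) ℝ satisfy ∑_{j=0}^∞ ‖Ψ_j‖ < ∞. Then for every t ∈ ℤ the partial sums S_N(t) = ∑_{j=0}^{N} Ψ_j ε_{t−j} converge componentwise in L²(P) to a limit Y_t as N → ∞, and for all t ∈ ℤ, τ ∈ ℕ and all indices k, l: E[Y_{t,k} Y_{t−τ,l}] = ∑_{j=0}^∞ (Ψ_{j+τ} Σ Ψ_jᵀ)_{kl}; in particular this second moment does not depend on t, so the process (Y_t) is weakly stationary with autocovariance matrix function γ(τ) = ∑_{j=0}^∞ Ψ_{j+τ}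 Σ Ψ_jᵀ. -/
/-!
Lift each coordinate `ε t · k` to `L²(P)`. The moment hypotheses say that these vectors are
orthogonal across times and have Gram matrix `Σ` at each time, so the `k`-th coordinate of
`Ψ j *ᵥ ε (t - j)` has `L²` norm at most `‖Ψ j‖ * ∑ m, √(Σ m m)`: the series is absolutely
convergent in the complete space `L²(P)`, and its sum is `Y t`. By continuity of the inner
product, `E[Y t k * Y (t - τ) l]` is a double series of inner products of terms, in which only
the pairs of terms driven by the same noise vector, i.e. lags `j + τ` and `j`, survive.
-/

open MeasureTheory Filter Matrix
open scoped InnerProductSpace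

attribute [local instance] Matrix.frobeniusNormedAddCommGroup

theorem Matrix.frobenius_norm_entry_le {m n α : Type*} [Fintype m] [Fintype n]
    [NormedAddCommGroup α] (A : Matrix m n α) (i : m) (j : n) : ‖A i j‖ ≤ ‖A‖ :=
  (PiLp.norm_apply_le (WithLp.toLp 2 (A i)) j).trans
    (PiLp.norm_apply_le (WithLp.toLp 2 fun i => WithLp.toLp 2 (A i)) i)

section InnerProduct

variable {E : Type*} [NormedAddCommGroup E] [InnerProductSpace ℝ E]

theorem inner_sum_smul_sum_smul {ι κ ι' κ' : Type*} [Fintype ι] [Fintype κ]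
    (A : Matrix ι' ι ℝ) (B : Matrix κ' κ ℝ) (u : ι → E) (v : κ → E) (k : ι') (l : κ') :
    ⟪∑ m, A k m • u m, ∑ n, B l n • v n⟫_ℝ =
      (A * Matrix.of (fun m n => ⟪u m, v n⟫_ℝ) * Bᵀ) k l := by
  simp only [sum_inner, inner_sum, real_inner_smul_left, real_inner_smul_right,
    Matrix.mul_apply, Matrix.of_apply, Matrix.transpose_apply, Finset.sum_mul]
  exact Finset.sum_congr rfl fun _ _ => Finset.sum_congr rfl fun _ _ => by ring

theorem inner_tsum_tsum_of_orthogonal {ι κ : Type*} {f : ι → E} {g : κ → E}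
    (hf : Summable f) (hg : Summable g) (σ : κ → ι)
    (horth : ∀ i j, i ≠ σ j → ⟪f i, g j⟫_ℝ = 0) :
    ⟪∑' i, f i, ∑' j, g j⟫_ℝ = ∑' j, ⟪f (σ j), g j⟫_ℝ := by
  have hleft : ∀ j, ⟪∑' i, f i, g j⟫_ℝ = ∑' i, ⟪f i, g j⟫_ℝ := fun j => by
    simpa only [innerSL_apply_apply, real_inner_comm (g j)] using (innerSL ℝ (g j)).map_tsum hf
  have hright := (innerSL ℝ (∑' i, f i)).map_tsum hg
  simp only [innerSL_apply_apply] at hright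
  rw [hright]
  exact tsum_congr fun j => (hleft j).trans (tsum_eq_single (σ j) fun i hi => horth i j hi)

end InnerProduct

section MovingAverage

variable {E : Type*} [NormedAddCommGroup E] [InnerProductSpace ℝ E] {ι : Type*}

def IsWhiteNoise (e : ℤ → ι → E) (Sig : Matrix ι ι ℝ) : Prop :=
  ∀ s u m n, ⟪e s m, e u n⟫_ℝ = if s = u then Sig m n else 0

theorem IsWhiteNoise.norm_eq {e : ℤ → ι → E} {Sig : Matrix ι ι ℝ} (he : IsWhiteNoise e Sig)
    (s : ℤ) (m : ι) : ‖e s m‖ = √(Sig m m) := by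
  have hsq : ‖e s m‖ ^ 2 = Sig m m := by
    rw [← real_inner_self_eq_norm_sq, he, if_pos rfl]
  rw [← hsq, Real.sqrt_sq (norm_nonneg _)]

variable [Fintype ι]

def movingAverageTerm (Ψ : ℕ → Matrix ι ι ℝ) (e : ℤ → ι → E) (t : ℤ) (k : ι) (j : ℕ) : E :=
  ∑ m, Ψ j k m • e (t - j) m

noncomputable def movingAverage (Ψ : ℕ → Matrix ι ι ℝ) (e : ℤ → ι → E) (t : ℤ) (k : ι) : E :=
  ∑' j, movingAverageTerm Ψ e t k j

variable {e : ℤ → ι → E} {Sig : Matrix ι ι ℝ}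

theorem IsWhiteNoise.norm_movingAverageTerm_le (he : IsWhiteNoise e Sig) (Ψ : ℕ → Matrix ι ι ℝ)
    (t : ℤ) (k : ι) (j : ℕ) : ‖movingAverageTerm Ψ e t k j‖ ≤ ‖Ψ j‖ * ∑ m, √(Sig m m) :=
  calc ‖movingAverageTerm Ψ e t k j‖ ≤ ∑ m, ‖Ψ j k m‖ * ‖e (t - j) m‖ := by
        simpa only [movingAverageTerm, norm_smul] using
          norm_sum_le Finset.univ fun m => Ψ j k m • e (t - j) m
    _ ≤ ∑ m, ‖Ψ j‖ * √(Sig m m) := by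
        gcongr with m
        · exact (Ψ j).frobenius_norm_entry_le k m
        · exact (he.norm_eq _ m).le
    _ = ‖Ψ j‖ * ∑ m, √(Sig m m) := Finset.mul_sum _ _ _ |>.symm

theorem IsWhiteNoise.summable_movingAverageTerm [CompleteSpace E] (he : IsWhiteNoise e Sig)
    {Ψ : ℕ → Matrix ι ι ℝ} (hΨ : Summable fun j => ‖Ψ j‖) (t : ℤ) (k : ι) :
    Summable (movingAverageTerm Ψ e t k) :=
  .of_norm_bounded (hΨ.mul_right _) (he.norm_movingAverageTerm_le Ψ t k)

theorem IsWhiteNoise.inner_movingAverageTerm (he : IsWhiteNoise e Sig) (Ψ : ℕ → Matrix ι ι ℝ)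
    (t t' : ℤ) (k l : ι) (i j : ℕ) :
    ⟪movingAverageTerm Ψ e t k i, movingAverageTerm Ψ e t' l j⟫_ℝ =
      if t - i = t' - j then (Ψ i * Sig * (Ψ j)ᵀ) k l else 0 := by
  have hgram : Matrix.of (fun m n => ⟪e (t - i) m, e (t' - j) n⟫_ℝ) =
      if t - i = t' - j then Sig else 0 := by
    split_ifs with h <;> ext m n <;> simp [he _ _ m n, h]
  rw [movingAverageTerm, movingAverageTerm, inner_sum_smul_sum_smul, hgram]
  split_ifs <;> simp

theorem IsWhiteNoise.inner_movingAverage [CompleteSpace E] (he : IsWhiteNoise e Sig)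
    {Ψ : ℕ → Matrix ι ι ℝ} (hΨ : Summable fun j => ‖Ψ j‖) (t : ℤ) (τ : ℕ) (k l : ι) :
    ⟪movingAverage Ψ e t k, movingAverage Ψ e (t - τ) l⟫_ℝ =
      ∑' j, (Ψ (j + τ) * Sig * (Ψ j)ᵀ) k l := by
  rw [movingAverage, movingAverage,
    inner_tsum_tsum_of_orthogonal (he.summable_movingAverageTerm hΨ t k)
      (he.summable_movingAverageTerm hΨ (t - τ) l) (· + τ)]
  · refine tsum_congr fun j => ?_
    rw [he.inner_movingAverageTerm, if_pos (by push_cast; ring)]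
  · intro i j hij
    rw [he.inner_movingAverageTerm, if_neg (by omega)]

end MovingAverage

namespace MeasureTheory

variable {α : Type*} [MeasurableSpace α] {μ : Measure α}

theorem Lp.coeFn_finsetSum_ae_eq {E κ : Type*} [NormedAddCommGroup E] {p : ENNReal}
    (s : Finset κ) {f : κ → Lp E p μ} {g : κ → α → E} (h : ∀ i ∈ s, f i =ᵐ[μ] g i) :
    ⇑(∑ i ∈ s, f i) =ᵐ[μ] fun x => ∑ i ∈ s, g i x := by
  filter_upwards [Lp.coeFn_fun_finsetSum s f, (eventually_all_finset s).2 h] with x hsum hx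
  rw [hsum]
  exact Finset.sum_congr rfl hx

theorem L2.real_inner_eq_integral (f g : Lp ℝ 2 μ) : ⟪f, g⟫_ℝ = ∫ x, f x * g x ∂μ := by
  simp only [L2.inner_def, RCLike.inner_apply, conj_trivial, mul_comm]

theorem MemLp.real_inner_toLp {f g : α → ℝ} (hf : MemLp f 2 μ) (hg : MemLp g 2 μ) :
    ⟪hf.toLp f, hg.toLp g⟫_ℝ = ∫ x, f x * g x ∂μ := by
  rw [L2.real_inner_eq_integral]
  refine integral_congr_ae ?_
  filter_upwards [hf.coeFn_toLp, hg.coeFn_toLp] with x hfx hgx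
  rw [hfx, hgx]

theorem L2.tendsto_integral_sq_sub {F : ℕ → Lp ℝ 2 μ} {G : Lp ℝ 2 μ} {f : ℕ → α → ℝ}
    (hFG : Tendsto F atTop (nhds G)) (hf : ∀ N, F N =ᵐ[μ] f N) :
    Tendsto (fun N => ∫ x, (f N x - G x) ^ 2 ∂μ) atTop (nhds 0) := by
  have hnorm : Tendsto (fun N => ‖F N - G‖ ^ 2) atTop (nhds 0) := by
    simpa using (tendsto_iff_norm_sub_tendsto_zero.mp hFG).pow 2
  refine hnorm.congr fun N => ?_
  rw [← real_inner_self_eq_norm_sq, L2.real_inner_eq_integral]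
  refine integral_congr_ae ?_
  filter_upwards [Lp.coeFn_sub (F N) G, hf N] with x hsub hfx
  rw [hsub, Pi.sub_apply, hfx, sq]

end MeasureTheory

section RandomNoise

variable {Ω ι : Type*} [MeasurableSpace Ω] {P : Measure Ω} {ε : ℤ → Ω → ι → ℝ}

theorem isWhiteNoise_toLp (hL2 : ∀ t k, MemLp (fun ω => ε t ω k) 2 P) {Sig : Matrix ι ι ℝ}
    (huncorr : ∀ s t k l, s ≠ t → ∫ ω, ε s ω k * ε t ω l ∂P = 0)
    (hcov : ∀ t k l, ∫ ω, ε t ω k * ε t ω l ∂P = Sig k l) :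
    IsWhiteNoise (fun t k => (hL2 t k).toLp) Sig := by
  intro s u m n
  rw [MemLp.real_inner_toLp]
  split_ifs with h
  · rw [h, hcov]
  · exact huncorr s u m n h

theorem coeFn_movingAverageTerm_toLp [Fintype ι] (hL2 : ∀ t k, MemLp (fun ω => ε t ω k) 2 P)
    (Ψ : ℕ → Matrix ι ι ℝ) (t : ℤ) (k : ι) (j : ℕ) :
    ⇑(movingAverageTerm Ψ (fun t k => (hL2 t k).toLp) t k j) =ᵐ[P]
      fun ω => (Ψ j *ᵥ ε (t - j) ω) k := by
  refine Lp.coeFn_finsetSum_ae_eq _ fun m _ => ?_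
  filter_upwards [Lp.coeFn_smul (Ψ j k m) ((hL2 (t - j) m).toLp), (hL2 (t - j) m).coeFn_toLp]
    with ω hsmul hω
  rw [hsmul, Pi.smul_apply, hω, smul_eq_mul]

end RandomNoise

theorem linear_process_L2_convergence_and_stationarity_general
    {Ω : Type*} [MeasurableSpace Ω] (P : Measure Ω)
    (r : ℕ)
    (ε : ℤ → Ω → (Fin r → ℝ))
    (Sig : Matrix (Fin r) (Fin r) ℝ)
    (hL2 : ∀ (t : ℤ) (k : Fin r), MemLp (fun ω => ε t ω k) 2 P)
    (huncorr : ∀ (s t : ℤ) (k l : Fin r), s ≠ t → ∫ ω, ε s ω k * ε t ω l ∂P = 0)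
    (hcov : ∀ (t : ℤ) (k l : Fin r), ∫ ω, ε t ω k * ε t ω l ∂P = Sig k l)
    (Ψ : ℕ → Matrix (Fin r) (Fin r) ℝ) (hΨ : Summable (fun j => ‖Ψ j‖)) :
    ∃ Y : ℤ → Ω → (Fin r → ℝ),
      (∀ (t : ℤ) (k : Fin r), MemLp (fun ω => Y t ω k) 2 P) ∧
      (∀ (t : ℤ) (k : Fin r),
        Tendsto
          (fun N : ℕ =>
            ∫ ω,
              ((∑ j ∈ Finset.range (N + 1), (Ψ j).mulVec (ε (t - (j : ℤ)) ω)) k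
                - Y t ω k) ^ 2 ∂P)
          atTop (nhds 0)) ∧
      (∀ (t : ℤ) (τ : ℕ) (k l : Fin r),
        ∫ ω, Y t ω k * Y (t - (τ : ℤ)) ω l ∂P =
          ∑' j : ℕ, (Ψ (j + τ) * Sig * (Ψ j)ᵀ) k l) := by
  set e : ℤ → Fin r → Lp ℝ 2 P := fun t k => (hL2 t k).toLp
  have he : IsWhiteNoise e Sig := isWhiteNoise_toLp hL2 huncorr hcov
  refine ⟨fun t ω k => movingAverage Ψ e t k ω, fun t k => Lp.memLp _, fun t k => ?_,
    fun t τ k l => ?_⟩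
  · have hpartial := (he.summable_movingAverageTerm hΨ t k).hasSum.tendsto_sum_nat.comp
      (tendsto_add_atTop_nat 1)
    refine L2.tendsto_integral_sq_sub hpartial fun N => ?_
    filter_upwards [Lp.coeFn_finsetSum_ae_eq (Finset.range (N + 1))
      fun j _ => coeFn_movingAverageTerm_toLp hL2 Ψ t k j] with ω hω
    rw [Function.comp_apply, hω, Finset.sum_apply]
  · rw [← L2.real_inner_eq_integral, he.inner_movingAverage hΨ]

theorem linear_process_L2_convergence_and_stationarity
    {Ω : Type*} [MeasurableSpace Ω] (P : Measure Ω) [IsProbabilityMeasure P]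
    (r : ℕ) (hr : 1 ≤ r)
    (ε : ℤ → Ω → (Fin r → ℝ))
    (Sig : Matrix (Fin r) (Fin r) ℝ) (hSigSymm : Sig.IsSymm) (hSigPSD : Sig.PosSemidef)
    (hL2 : ∀ (t : ℤ) (k : Fin r), MemLp (fun ω => ε t ω k) 2 P)
    (hmean : ∀ (t : ℤ) (k : Fin r), ∫ ω, ε t ω k ∂P = 0)
    (huncorr : ∀ (s t : ℤ) (k l : Fin r), s ≠ t → ∫ ω, ε s ω k * ε t ω l ∂P = 0)
    (hcov : ∀ (t : ℤ) (k l : Fin r), ∫ ω, ε t ω k * ε t ω l ∂P = Sig k l)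
    (Ψ : ℕ → Matrix (Fin r) (Fin r) ℝ) (hΨ : Summable (fun j => ‖Ψ j‖)) :
    ∃ Y : ℤ → Ω → (Fin r → ℝ),
      (∀ (t : ℤ) (k : Fin r), MemLp (fun ω => Y t ω k) 2 P) ∧
      (∀ (t : ℤ) (k : Fin r),
        Tendsto
          (fun N : ℕ =>
            ∫ ω,
              ((∑ j ∈ Finset.range (N + 1), (Ψ j).mulVec (ε (t - (j : ℤ)) ω)) k
                - Y t ω k) ^ 2 ∂P)
          atTop (nhds 0)) ∧
      (∀ (t : ℤ) (τ : ℕ) (k l : Fin r),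
        ∫ ω, Y t ω k * Y (t - (τ : ℤ)) ω l ∂P =
          ∑' j : ℕ, (Ψ (j + τ) * Sig * (Ψ j)ᵀ) k l) :=
  linear_process_L2_convergence_and_stationarity_general P r ε Sig hL2 huncorr hcov Ψ hΨ
end
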